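/- Let y, z, p : ℝ² → ℝ be smooth functions such that the map f(u,v) = (u, y(u,v), z(u,v), p(u,v), v) satisfies the contact condition on ℝ² (z_u = p + v·y_u and z_v = v·y_v) and the Hess = −1 condition on ℝ² (which for this f reads y_v + p_u = 0). Then p_v = −y_u and p_u = −y_v hold on ℝ², and there exist smooth functions φ, ψ : ℝ → ℝ such that y(u,v) = φ(u+v) + ψ(u−v) and p(u,v) = −φ(u+v) + ψ(u−v) for all (u,v) ∈ ℝ². -/

import Mathlib

noncomputable section

/-- Partial derivative in the direction `(1,0)`. -/
def pu (g : ℝ × ℝ → ℝ) (a : ℝ × ℝ) : ℝ := fderiv ℝ g a (1, 0)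

/-- Partial derivative in the direction `(0,1)`. -/
def pv (g : ℝ × ℝ → ℝ) (a : ℝ × ℝ) : ℝ := fderiv ℝ g a (0, 1)

lemma smooth_fderiv_apply (g : ℝ × ℝ → ℝ) (hg : ContDiff ℝ (⊤ : ℕ∞) g) (w : ℝ × ℝ) :
    ContDiff ℝ (⊤ : ℕ∞) (fun x => fderiv ℝ g x w) :=
  (hg.fderiv_right (m := (⊤:ℕ∞)) (by simp)).clm_apply contDiff_const

lemma fderiv_pd (g : ℝ × ℝ → ℝ) (hg : ContDiff ℝ (⊤ : ℕ∞) g) (w a v : ℝ × ℝ) :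
    fderiv ℝ (fun x => fderiv ℝ g x w) a v = fderiv ℝ (fderiv ℝ g) a v w := by
  rw [fderiv_clm_apply
    ((hg.fderiv_right (m := (⊤:ℕ∞)) (by simp)).differentiable (by simp) a)
    (differentiableAt_const w)]
  simp

lemma symm2 (g : ℝ × ℝ → ℝ) (hg : ContDiff ℝ (⊤ : ℕ∞) g) (a : ℝ × ℝ) :
    pu (pv g) a = pv (pu g) a := by
  have hs : IsSymmSndFDerivAt ℝ g a := hg.contDiffAt.isSymmSndFDerivAt (by simp; exact WithTop.coe_le_coe.mpr le_top)
  show fderiv ℝ (fun x => fderiv ℝ g x (0,1)) a (1,0)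
      = fderiv ℝ (fun x => fderiv ℝ g x (1,0)) a (0,1)
  rw [fderiv_pd g hg _ a _, fderiv_pd g hg _ a _]
  exact hs _ _

/-- For a geometric solution `f(u,v) = (u, y, z, p, v)` to Hess = -1, the pair `(p,y)`
satisfies the wave equations and is given by d'Alembert's formula. -/
theorem stmt5 (y z p : ℝ × ℝ → ℝ)
    (hy : ContDiff ℝ (⊤ : ℕ∞) y) (hz : ContDiff ℝ (⊤ : ℕ∞) z)
    (hp : ContDiff ℝ (⊤ : ℕ∞) p)
    (hcontact : ∀ a : ℝ × ℝ, pu z a = p a + a.2 * pu y a ∧ pv z a = a.2 * pv y a)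
    (hhess : ∀ a : ℝ × ℝ, pv y a + pu p a = 0) :
    (∀ a : ℝ × ℝ, pv p a = - pu y a ∧ pu p a = - pv y a) ∧
    ∃ φ ψ : ℝ → ℝ, ContDiff ℝ (⊤ : ℕ∞) φ ∧ ContDiff ℝ (⊤ : ℕ∞) ψ ∧
      ∀ a : ℝ × ℝ, y a = φ (a.1 + a.2) + ψ (a.1 - a.2) ∧
        p a = - φ (a.1 + a.2) + ψ (a.1 - a.2) := by
  have hpuy : ContDiff ℝ (⊤ : ℕ∞) (pu y) := smooth_fderiv_apply y hy _
  have hpvy : ContDiff ℝ (⊤ : ℕ∞) (pv y) := smooth_fderiv_apply y hy _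
  have hpd : Differentiable ℝ p := hp.differentiable (by simp)
  have hyd : Differentiable ℝ y := hy.differentiable (by simp)
  -- pu z and pv z as functions
  have h1 : pu z = fun x => p x + x.2 * pu y x := funext fun a => (hcontact a).1
  have h2 : pv z = fun x => x.2 * pv y x := funext fun a => (hcontact a).2
  -- wave equation: pv p = - pu y
  have hwave : ∀ a : ℝ × ℝ, pv p a = - pu y a := by
    intro a
    have hsymz := symm2 z hz a
    have hsymy := symm2 y hy a
    rw [h1, h2] at hsymz
    -- compute pu (fun x => x.2 * pv y x) a
    have e1 : pu (fun x => x.2 * pv y x) a = a.2 * pu (pv y) a := by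
      show fderiv ℝ (fun x => x.2 * pv y x) a (1,0) = _
      rw [fderiv_fun_mul (differentiable_snd.differentiableAt)
        ((hpvy.differentiable (by simp) a))]
      have : fderiv ℝ (fun x : ℝ × ℝ => x.2) a = ContinuousLinearMap.snd ℝ ℝ ℝ := fderiv_snd
      simp [this, pu]
    have e2 : pv (fun x => p x + x.2 * pu y x) a
        = pv p a + (pu y a + a.2 * pv (pu y) a) := by
      show fderiv ℝ (fun x => p x + x.2 * pu y x) a (0,1) = _
      rw [fderiv_fun_add (g := fun x => x.2 * pu y x) (hpd a)
        ((differentiable_snd.mul (hpuy.differentiable (by simp))) a)]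
      rw [ContinuousLinearMap.add_apply]
      rw [fderiv_fun_mul (differentiable_snd.differentiableAt)
        ((hpuy.differentiable (by simp) a))]
      have : fderiv ℝ (fun x : ℝ × ℝ => x.2) a = ContinuousLinearMap.snd ℝ ℝ ℝ := fderiv_snd
      simp [this, pv]
      ring
    rw [e1, e2] at hsymz
    have hyy : pu (pv y) a = pv (pu y) a := hsymy
    rw [hyy] at hsymz
    linarith
  have hwave2 : ∀ a : ℝ × ℝ, pu p a = - pv y a := fun a => by linarith [hhess a]
  refine ⟨fun a => ⟨hwave a, hwave2 a⟩, ?_⟩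
  -- d'Alembert
  set F : ℝ × ℝ → ℝ := fun a => y a + p a with hF
  set G : ℝ × ℝ → ℝ := fun a => y a - p a with hG
  have hFd : Differentiable ℝ F := hyd.add hpd
  have hGd : Differentiable ℝ G := hyd.sub hpd
  have hvec : ((1:ℝ),(1:ℝ)) = ((1:ℝ),(0:ℝ)) + ((0:ℝ),(1:ℝ)) := by simp
  have hvec2 : ((-1:ℝ),(1:ℝ)) = -((1:ℝ),(0:ℝ)) + ((0:ℝ),(1:ℝ)) := by
    simp [Prod.ext_iff]
  have hF1 : ∀ a : ℝ × ℝ, fderiv ℝ F a (1,1) = 0 := by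
    intro a
    have : fderiv ℝ F a = fderiv ℝ y a + fderiv ℝ p a :=
      fderiv_add (hyd a) (hpd a)
    rw [this, hvec]
    simp only [ContinuousLinearMap.add_apply, map_add]
    have := hwave a; have := hwave2 a
    simp only [pu, pv] at *
    linarith
  have hG1 : ∀ a : ℝ × ℝ, fderiv ℝ G a (-1,1) = 0 := by
    intro a
    have : fderiv ℝ G a = fderiv ℝ y a - fderiv ℝ p a :=
      fderiv_sub (hyd a) (hpd a)
    rw [this, hvec2]
    simp only [ContinuousLinearMap.sub_apply, map_add, map_neg]
    have := hwave a; have := hwave2 a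
    simp only [pu, pv] at *
    linarith
  have hFconst : ∀ u v : ℝ, F (u, v) = F (u - v, 0) := by
    intro u v
    have hd : ∀ t : ℝ, HasDerivAt (fun t => F (u - v + t, t)) 0 t := by
      intro t
      have hc : HasDerivAt (fun t : ℝ => ((u - v + t, t) : ℝ × ℝ)) (1, 1) t :=
        ((hasDerivAt_id t).const_add (u - v)).prodMk (hasDerivAt_id t)
      have := HasFDerivAt.comp_hasDerivAt_of_eq t ((hFd (u - v + t, t)).hasFDerivAt) hc rfl
      rw [hF1 (u - v + t, t)] at this
      exact this
    have hconst := is_const_of_deriv_eq_zero (fun t => (hd t).differentiableAt)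
      (fun t => (hd t).deriv) v 0
    simpa using hconst
  have hGconst : ∀ u v : ℝ, G (u, v) = G (u + v, 0) := by
    intro u v
    have hd : ∀ t : ℝ, HasDerivAt (fun t => G (u + v - t, t)) 0 t := by
      intro t
      have hc : HasDerivAt (fun t : ℝ => ((u + v - t, t) : ℝ × ℝ)) (-1, 1) t :=
        (((hasDerivAt_id t).neg).const_add (u + v)).prodMk (hasDerivAt_id t)
      have := HasFDerivAt.comp_hasDerivAt_of_eq t ((hGd (u + v - t, t)).hasFDerivAt) hc rfl
      rw [hG1 (u + v - t, t)] at this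
      exact this
    have hconst := is_const_of_deriv_eq_zero (fun t => (hd t).differentiableAt)
      (fun t => (hd t).deriv) v 0
    simpa using hconst
  have hcurve : ContDiff ℝ (⊤ : ℕ∞) (fun t : ℝ => ((t, 0) : ℝ × ℝ)) :=
    contDiff_id.prodMk contDiff_const
  refine ⟨fun t => (y (t,0) - p (t,0)) / 2, fun t => (y (t,0) + p (t,0)) / 2,
    (((hy.comp hcurve).sub (hp.comp hcurve)).div_const 2),
    (((hy.comp hcurve).add (hp.comp hcurve)).div_const 2), ?_⟩
  rintro ⟨u, v⟩
  have hFa := hFconst u v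
  have hGa := hGconst u v
  simp only [hF, hG] at hFa hGa
  constructor <;> simp only <;> linarith
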